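/- For every real number k < 1 and every A ∈ (0,1) there is a constant C > 0 such that for every measurable function f : (0,A) → ℂ one has ∫₀^A r^{-1} (-log r)^{k-2} ( ∫_r^A |f(ρ)| dρ )² dr ≤ C · ∫₀^A |f(r)|² r (-log r)^k dr (an inequality in [0, ∞]). -/

import Mathlib

/-!
Put `ε = (1 - k) / 2` and use `d/dr (-log r)^t = -t r⁻¹ (-log r)^(t-1)`. Cauchy–Schwarz with
the weight `ρ (-log ρ)^(1-ε)` gives
`(∫_r^A |f|)² ≤ ε⁻¹ (-log r)^ε ∫_r^A |f ρ|² ρ (-log ρ)^(1-ε) dρ`, so the left-hand side is at most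
`ε⁻¹ ∫₀^A r⁻¹ (-log r)^(-ε-1) ∫_r^A |f ρ|² ρ (-log ρ)^(1-ε) dρ dr`. Exchanging the integrals,
the inner integral `∫₀^ρ r⁻¹ (-log r)^(-ε-1) dr ≤ ε⁻¹ (-log ρ)^(-ε)` turns the weight
`(-log ρ)^(1-ε)` into `(-log ρ)^k`, and `C = ε⁻²` works.
-/

open MeasureTheory Set
open scoped ENNReal

theorem setLIntegral_Ioo_le_of_forall_Ioo_le {g : ℝ → ℝ≥0∞} {a b : ℝ} {M : ℝ≥0∞}
    (h : ∀ a' ∈ Ioo a b, ∫⁻ x in Ioo a' b, g x ≤ M) : ∫⁻ x in Ioo a b, g x ≤ M := by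
  rcases le_or_gt b a with hba | hab
  · simp [Ioo_eq_empty_of_le hba]
  obtain ⟨u, hu_anti, hu_mem, hu_lim⟩ := exists_seq_strictAnti_tendsto' hab
  have hunion : ⋃ n, Ioo (u n) b = Ioo a b :=
    iUnion_Ioo_of_mono_of_isGLB_of_isLUB (g := fun _ : ℕ => b) hu_anti.antitone monotone_const
      (isGLB_of_tendsto_atTop hu_anti.antitone hu_lim) (by simp [isLUB_singleton])
  have hmono : Monotone fun n => Ioo (u n) b := fun m n hmn =>
    Ioo_subset_Ioo_left (hu_anti.antitone hmn)
  rw [← withDensity_apply', ← hunion, hmono.measure_iUnion]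
  exact iSup_le fun n => (withDensity_apply' g _).trans_le (h (u n) (hu_mem n))

theorem hasDerivAt_neg_log_rpow (t : ℝ) {x : ℝ} (hx0 : 0 < x) (hx1 : x < 1) :
    HasDerivAt (fun y => (-Real.log y) ^ t) (-(t * x⁻¹ * (-Real.log x) ^ (t - 1))) x := by
  have hL : 0 < -Real.log x := neg_pos.2 (Real.log_neg hx0 hx1)
  have hneg : HasDerivAt (fun y => -Real.log y) (-x⁻¹) x := (Real.hasDerivAt_log hx0.ne').neg
  convert hneg.rpow_const (p := t) (Or.inl hL.ne') using 1
  ring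

theorem lintegral_Ioo_inv_mul_neg_log_rpow {t a b : ℝ} (ht : t ≠ 0) (ha : 0 < a) (hab : a ≤ b)
    (hb : b < 1) :
    ∫⁻ r in Ioo a b, ENNReal.ofReal (r⁻¹ * (-Real.log r) ^ (t - 1)) =
      ENNReal.ofReal (((-Real.log a) ^ t - (-Real.log b) ^ t) / t) := by
  have hmem : ∀ x ∈ Icc a b, 0 < x ∧ x < 1 := fun x hx => ⟨ha.trans_le hx.1, hx.2.trans_lt hb⟩
  have hderiv : ∀ x ∈ uIcc a b, HasDerivAt (fun y => -((-Real.log y) ^ t / t))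
      (x⁻¹ * (-Real.log x) ^ (t - 1)) x := by
    intro x hx
    rw [uIcc_of_le hab] at hx
    have h := ((hasDerivAt_neg_log_rpow t (hmem x hx).1 (hmem x hx).2).div_const t).neg
    refine h.congr_deriv ?_
    field_simp
  have hcont : ContinuousOn (fun r => r⁻¹ * (-Real.log r) ^ (t - 1)) (Icc a b) := by
    refine fun x hx => ((continuousAt_inv₀ (hmem x hx).1.ne').mul ?_).continuousWithinAt
    exact (Real.continuousAt_log (hmem x hx).1.ne').neg.rpow_const
      (Or.inl (neg_pos.2 (Real.log_neg (hmem x hx).1 (hmem x hx).2)).ne')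
  have hnonneg : 0 ≤ᵐ[volume.restrict (Ioc a b)] fun r => r⁻¹ * (-Real.log r) ^ (t - 1) := by
    filter_upwards [ae_restrict_mem measurableSet_Ioc] with x hx
    obtain ⟨hx0, hx1⟩ := hmem x (Ioc_subset_Icc_self hx)
    have := neg_pos.2 (Real.log_neg hx0 hx1)
    positivity
  rw [Measure.restrict_congr_set Ioo_ae_eq_Ioc, ← ofReal_integral_eq_lintegral_ofReal
    ((hcont.integrableOn_Icc).mono_set Ioc_subset_Icc_self) hnonneg,
    ← intervalIntegral.integral_of_le hab, intervalIntegral.integral_eq_sub_of_hasDerivAt hderiv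
      ((hcont.mono (uIcc_of_le hab).subset).intervalIntegrable)]
  congr 1
  ring

theorem sq_lintegral_ofReal_le_mul {α : Type*} [MeasurableSpace α] {μ : Measure α} {g w : α → ℝ}
    (hg : AEMeasurable g μ) (hw : AEMeasurable w μ) (hg0 : 0 ≤ g) (hw0 : ∀ᵐ x ∂μ, 0 < w x) :
    (∫⁻ x, ENNReal.ofReal (g x) ∂μ) ^ 2 ≤
      (∫⁻ x, ENNReal.ofReal (g x ^ 2 * w x) ∂μ) * ∫⁻ x, ENNReal.ofReal (w x)⁻¹ ∂μ := by
  set u : α → ℝ≥0∞ := fun x => ENNReal.ofReal (g x * √(w x))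
  set v : α → ℝ≥0∞ := fun x => ENNReal.ofReal (√(w x))⁻¹
  have huv : ∫⁻ x, ENNReal.ofReal (g x) ∂μ = ∫⁻ x, (u * v) x ∂μ := by
    refine lintegral_congr_ae (hw0.mono fun x hx => ?_)
    have := Real.sqrt_pos.2 hx
    simp only [Pi.mul_apply, u, v, ← ENNReal.ofReal_mul (mul_nonneg (hg0 x) this.le)]
    field_simp
  have hu : ∫⁻ x, u x ^ (2 : ℝ) ∂μ = ∫⁻ x, ENNReal.ofReal (g x ^ 2 * w x) ∂μ := by
    refine lintegral_congr_ae (hw0.mono fun x hx => ?_)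
    simp only [u]
    rw [ENNReal.ofReal_rpow_of_nonneg (mul_nonneg (hg0 x) (Real.sqrt_nonneg _)) zero_le_two,
      Real.rpow_two, mul_pow, Real.sq_sqrt hx.le]
  have hv : ∫⁻ x, v x ^ (2 : ℝ) ∂μ = ∫⁻ x, ENNReal.ofReal (w x)⁻¹ ∂μ := by
    refine lintegral_congr_ae (hw0.mono fun x hx => ?_)
    simp only [v]
    rw [ENNReal.ofReal_rpow_of_nonneg (inv_nonneg.2 (Real.sqrt_nonneg _)) zero_le_two,
      Real.rpow_two, inv_pow, Real.sq_sqrt hx.le]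
  have holder : ∫⁻ x, (u * v) x ∂μ ≤
      (∫⁻ x, u x ^ (2 : ℝ) ∂μ) ^ (1 / 2 : ℝ) * (∫⁻ x, v x ^ (2 : ℝ) ∂μ) ^ (1 / 2 : ℝ) :=
    ENNReal.lintegral_mul_le_Lp_mul_Lq μ Real.HolderConjugate.two_two
      (hg.mul hw.sqrt).ennreal_ofReal hw.sqrt.inv.ennreal_ofReal
  rw [huv, ← hu, ← hv]
  calc (∫⁻ x, (u * v) x ∂μ) ^ 2
      ≤ ((∫⁻ x, u x ^ (2 : ℝ) ∂μ) ^ (1 / 2 : ℝ) * (∫⁻ x, v x ^ (2 : ℝ) ∂μ) ^ (1 / 2 : ℝ)) ^ 2 := by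
        gcongr
    _ = _ := by
        rw [mul_pow, ← ENNReal.rpow_natCast, ← ENNReal.rpow_natCast, ← ENNReal.rpow_mul,
          ← ENNReal.rpow_mul]
        norm_num

theorem lintegral_Ioo_inv_mul_neg_log_rpow_le {ε a b : ℝ} (hε : 0 < ε) (ha : 0 < a) (hab : a ≤ b)
    (hb : b < 1) :
    ∫⁻ r in Ioo a b, ENNReal.ofReal (r⁻¹ * (-Real.log r) ^ (ε - 1)) ≤
      ENNReal.ofReal ((-Real.log a) ^ ε / ε) := by
  have hLb : 0 ≤ -Real.log b := neg_nonneg.2 (Real.log_nonpos (ha.trans_le hab).le hb.le)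
  rw [lintegral_Ioo_inv_mul_neg_log_rpow hε.ne' ha hab hb]
  gcongr
  exact sub_le_self _ (Real.rpow_nonneg hLb _)

theorem lintegral_Ioo_zero_inv_mul_neg_log_rpow_le {ε b : ℝ} (hε : 0 < ε) (hb : b < 1) :
    ∫⁻ r in Ioo 0 b, ENNReal.ofReal (r⁻¹ * (-Real.log r) ^ (-ε - 1)) ≤
      ENNReal.ofReal ((-Real.log b) ^ (-ε) / ε) := by
  refine setLIntegral_Ioo_le_of_forall_Ioo_le fun a ha => ?_
  have hLa : 0 ≤ -Real.log a := neg_nonneg.2 (Real.log_nonpos ha.1.le (ha.2.trans hb).le)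
  rw [lintegral_Ioo_inv_mul_neg_log_rpow (neg_ne_zero.2 hε.ne') ha.1 ha.2.le hb, div_neg,
    ← neg_div, neg_sub]
  gcongr
  exact sub_le_self _ (Real.rpow_nonneg hLa _)

theorem sq_lintegral_Ioo_le {g : ℝ → ℝ} (hg : Measurable g) (hg0 : 0 ≤ g) {s r A : ℝ} (hs : s < 1)
    (hr : 0 < r) (hrA : r ≤ A) (hA : A < 1) :
    (∫⁻ ρ in Ioo r A, ENNReal.ofReal (g ρ)) ^ 2 ≤
      ENNReal.ofReal ((-Real.log r) ^ (1 - s) / (1 - s)) *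
        ∫⁻ ρ in Ioo r A, ENNReal.ofReal (g ρ ^ 2 * (ρ * (-Real.log ρ) ^ s)) := by
  have hw0 : ∀ᵐ ρ ∂volume.restrict (Ioo r A), 0 < ρ * (-Real.log ρ) ^ s := by
    filter_upwards [ae_restrict_mem measurableSet_Ioo] with ρ hρ
    have hρ0 := hr.trans hρ.1
    have hL := neg_pos.2 (Real.log_neg hρ0 (hρ.2.trans hA))
    positivity
  have hinv : ∫⁻ ρ in Ioo r A, ENNReal.ofReal (ρ * (-Real.log ρ) ^ s)⁻¹ =
      ∫⁻ ρ in Ioo r A, ENNReal.ofReal (ρ⁻¹ * (-Real.log ρ) ^ (1 - s - 1)) := by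
    refine setLIntegral_congr_fun measurableSet_Ioo fun ρ hρ => ?_
    rw [mul_inv, sub_sub_cancel_left, Real.rpow_neg
      (neg_nonneg.2 (Real.log_nonpos (hr.trans hρ.1).le (hρ.2.trans hA).le))]
  calc _ ≤ (∫⁻ ρ in Ioo r A, ENNReal.ofReal (g ρ ^ 2 * (ρ * (-Real.log ρ) ^ s))) *
        ∫⁻ ρ in Ioo r A, ENNReal.ofReal (ρ * (-Real.log ρ) ^ s)⁻¹ :=
      sq_lintegral_ofReal_le_mul hg.aemeasurable
        (measurable_id.mul (Real.measurable_log.neg.pow_const s)).aemeasurable hg0 hw0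
    _ ≤ _ := by
      rw [mul_comm, hinv]
      gcongr
      exact lintegral_Ioo_inv_mul_neg_log_rpow_le (sub_pos.2 hs) hr hrA hA

theorem lintegral_Ioo_mul_lintegral_Ioo_comm {F G : ℝ → ℝ≥0∞} (hF : Measurable F)
    (hG : Measurable G) (a b : ℝ) :
    ∫⁻ r in Ioo a b, F r * ∫⁻ ρ in Ioo r b, G ρ =
      ∫⁻ ρ in Ioo a b, (∫⁻ r in Ioo a ρ, F r) * G ρ := by
  set H : ℝ × ℝ → ℝ≥0∞ := {p | p.1 < p.2}.indicator fun p => F p.1 * G p.2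
  have hH : Measurable H :=
    ((hF.comp measurable_fst).mul (hG.comp measurable_snd)).indicator
      (measurableSet_lt measurable_fst measurable_snd)
  have hleft : ∀ r ρ, H (r, ρ) = F r * (Ioi r).indicator G ρ := by
    intro r ρ
    by_cases h : r < ρ <;> simp [H, h, indicator]
  have hright : ∀ r ρ, H (r, ρ) = (Iio ρ).indicator F r * G ρ := by
    intro r ρ
    by_cases h : r < ρ <;> simp [H, h, indicator]
  calc ∫⁻ r in Ioo a b, F r * ∫⁻ ρ in Ioo r b, G ρ
      = ∫⁻ r in Ioo a b, ∫⁻ ρ in Ioo a b, H (r, ρ) := by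
        refine setLIntegral_congr_fun measurableSet_Ioo fun r hr => ?_
        simp_rw [hleft]
        rw [lintegral_const_mul _ (hG.indicator measurableSet_Ioi),
          lintegral_indicator measurableSet_Ioi, Measure.restrict_restrict measurableSet_Ioi,
          Ioi_inter_Ioo, max_eq_left hr.1.le]
    _ = ∫⁻ ρ in Ioo a b, ∫⁻ r in Ioo a b, H (r, ρ) :=
        lintegral_lintegral_swap hH.aemeasurable
    _ = _ := by
        refine setLIntegral_congr_fun measurableSet_Ioo fun ρ hρ => ?_
        simp_rw [hright]
        rw [lintegral_mul_const _ (hF.indicator measurableSet_Iio),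
          lintegral_indicator measurableSet_Iio, Measure.restrict_restrict measurableSet_Iio,
          Iio_inter_Ioo, min_eq_left hρ.2.le]

theorem inv_mul_neg_log_rpow_mul_sq_lintegral_Ioo_le {g : ℝ → ℝ} (hg : Measurable g) (hg0 : 0 ≤ g)
    {k ε r A : ℝ} (hε : 0 < ε) (hkε : k = 1 - 2 * ε) (hr : 0 < r) (hrA : r ≤ A) (hA : A < 1) :
    ENNReal.ofReal (r⁻¹ * (-Real.log r) ^ (k - 2)) * (∫⁻ ρ in Ioo r A, ENNReal.ofReal (g ρ)) ^ 2 ≤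
      ENNReal.ofReal ε⁻¹ * (ENNReal.ofReal (r⁻¹ * (-Real.log r) ^ (-ε - 1)) *
        ∫⁻ ρ in Ioo r A, ENNReal.ofReal (g ρ ^ 2 * (ρ * (-Real.log ρ) ^ (1 - ε)))) := by
  have hL := neg_pos.2 (Real.log_neg hr (hrA.trans_lt hA))
  calc _ ≤ ENNReal.ofReal (r⁻¹ * (-Real.log r) ^ (k - 2)) *
        (ENNReal.ofReal ((-Real.log r) ^ (1 - (1 - ε)) / (1 - (1 - ε))) *
          ∫⁻ ρ in Ioo r A, ENNReal.ofReal (g ρ ^ 2 * (ρ * (-Real.log ρ) ^ (1 - ε)))) := by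
        gcongr
        exact sq_lintegral_Ioo_le hg hg0 (by linarith) hr hrA hA
    _ = _ := by
      rw [sub_sub_cancel, ← mul_assoc,
        ← ENNReal.ofReal_mul (mul_nonneg (inv_nonneg.2 hr.le) (Real.rpow_nonneg hL.le _)),
        ← mul_assoc, ← ENNReal.ofReal_mul (by positivity)]
      congr 2
      rw [show -ε - 1 = k - 2 + ε by rw [hkε]; ring, Real.rpow_add hL]
      field_simp

theorem lintegral_Ioo_zero_inv_mul_neg_log_rpow_mul_le {k ε ρ x : ℝ} (hε : 0 < ε)
    (hkε : k = 1 - 2 * ε) (hρ0 : 0 < ρ) (hρ1 : ρ < 1) :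
    (∫⁻ r in Ioo 0 ρ, ENNReal.ofReal (r⁻¹ * (-Real.log r) ^ (-ε - 1))) *
        ENNReal.ofReal (x * (ρ * (-Real.log ρ) ^ (1 - ε))) ≤
      ENNReal.ofReal ε⁻¹ * ENNReal.ofReal (x * ρ * (-Real.log ρ) ^ k) := by
  have hL := neg_pos.2 (Real.log_neg hρ0 hρ1)
  calc _ ≤ ENNReal.ofReal ((-Real.log ρ) ^ (-ε) / ε) *
        ENNReal.ofReal (x * (ρ * (-Real.log ρ) ^ (1 - ε))) := by
        gcongr
        exact lintegral_Ioo_zero_inv_mul_neg_log_rpow_le hε hρ1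
    _ = _ := by
      rw [← ENNReal.ofReal_mul (by positivity), ← ENNReal.ofReal_mul (by positivity)]
      congr 1
      rw [show k = (1 - ε) + -ε by rw [hkε]; ring, Real.rpow_add hL]
      field_simp

theorem hardy_weighted_zero_mode_k_lt_one_general (k : ℝ) (hk : k < 1)
    (A : ℝ) (hA1 : A < 1) :
    ∃ C : ℝ, 0 < C ∧ ∀ f : ℝ → ℂ, Measurable f →
      ∫⁻ r in Set.Ioo (0 : ℝ) A,
          ENNReal.ofReal (r⁻¹ * (-Real.log r) ^ (k - 2)) *
            (∫⁻ ρ in Set.Ioo r A, ENNReal.ofReal ‖f ρ‖) ^ 2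
        ≤ ENNReal.ofReal C *
          ∫⁻ r in Set.Ioo (0 : ℝ) A,
            ENNReal.ofReal (‖f r‖ ^ 2 * r * (-Real.log r) ^ k) := by
  set ε := (1 - k) / 2
  have hε : 0 < ε := half_pos (sub_pos.2 hk)
  have hkε : k = 1 - 2 * ε := by ring
  refine ⟨ε⁻¹ * ε⁻¹, by positivity, fun f hf => ?_⟩
  set W : ℝ → ℝ≥0∞ := fun r => ENNReal.ofReal (r⁻¹ * (-Real.log r) ^ (-ε - 1))
  set G : ℝ → ℝ≥0∞ := fun ρ => ENNReal.ofReal (‖f ρ‖ ^ 2 * (ρ * (-Real.log ρ) ^ (1 - ε)))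
  have hW : Measurable W := by fun_prop
  have hG : Measurable G := by fun_prop
  calc _ ≤ ∫⁻ r in Ioo 0 A, ENNReal.ofReal ε⁻¹ * (W r * ∫⁻ ρ in Ioo r A, G ρ) :=
        setLIntegral_mono' measurableSet_Ioo fun r hr =>
          inv_mul_neg_log_rpow_mul_sq_lintegral_Ioo_le hf.norm (fun _ => norm_nonneg _) hε hkε
            hr.1 hr.2.le hA1
    _ = ENNReal.ofReal ε⁻¹ * ∫⁻ ρ in Ioo 0 A, (∫⁻ r in Ioo 0 ρ, W r) * G ρ := by
        rw [lintegral_const_mul' _ _ ENNReal.ofReal_ne_top,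
          lintegral_Ioo_mul_lintegral_Ioo_comm hW hG]
    _ ≤ ENNReal.ofReal ε⁻¹ * ∫⁻ ρ in Ioo 0 A,
          ENNReal.ofReal ε⁻¹ * ENNReal.ofReal (‖f ρ‖ ^ 2 * ρ * (-Real.log ρ) ^ k) := by
        gcongr ENNReal.ofReal ε⁻¹ * ?_
        exact setLIntegral_mono' measurableSet_Ioo fun ρ hρ =>
          lintegral_Ioo_zero_inv_mul_neg_log_rpow_mul_le hε hkε hρ.1 (hρ.2.trans hA1)
    _ = _ := by
        rw [lintegral_const_mul' _ _ ENNReal.ofReal_ne_top, ← mul_assoc,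
          ← ENNReal.ofReal_mul (inv_nonneg.2 hε.le)]

/-- Weighted Hardy-type inequality, zero Fourier mode, weight exponent `k < 1`: for every
`A ∈ (0,1)` there is `C > 0` such that for every measurable `f : (0,A) → ℂ`,
`∫₀^A r⁻¹ (-log r)^(k-2) (∫_r^A |f ρ| dρ)² dr ≤ C ∫₀^A |f r|² r (-log r)^k dr`
in `[0,∞]`. -/
theorem hardy_weighted_zero_mode_k_lt_one (k : ℝ) (hk : k < 1)
    (A : ℝ) (hA0 : 0 < A) (hA1 : A < 1) :
    ∃ C : ℝ, 0 < C ∧ ∀ f : ℝ → ℂ, Measurable f →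
      ∫⁻ r in Set.Ioo (0 : ℝ) A,
          ENNReal.ofReal (r⁻¹ * (-Real.log r) ^ (k - 2)) *
            (∫⁻ ρ in Set.Ioo r A, ENNReal.ofReal ‖f ρ‖) ^ 2
        ≤ ENNReal.ofReal C *
          ∫⁻ r in Set.Ioo (0 : ℝ) A,
            ENNReal.ofReal (‖f r‖ ^ 2 * r * (-Real.log r) ^ k) :=
  hardy_weighted_zero_mode_k_lt_one_general k hk A hA1
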